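/- Among the 2^100 binary words of length 100, the number of words in which HH occurrences strictly exceed HT occurrences is strictly less than the number in which HT occurrences strictly exceed HH occurrences. -/

import Mathlib

/-!
Write `d(w) = #HT − #HH`. Prepending a letter `b` to a word whose first letter is `c` adds
`pairWeight b c ∈ {-1, 0, 1}` to `d`, so the numbers of words of each length, first letter and
value of `d` satisfy a linear recurrence. On a window of values of `d` wide enough that nothing
leaves it, one step of this recurrence is a pair of list additions and shifts; iterating it
99 times produces the distribution of `d` over words of length 100, whose masses on `d < 0`
and on `d > 0` are then compared by evaluation.
-/

/-- Number of occurrences of the two-letter pattern `p q` in the word `w`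
(indices `i` with `w i = p` and `w (i+1) = q`). `H = true`, `T = false`. -/
def cnt {n : ℕ} (w : Fin n → Bool) (p q : Bool) : ℕ :=
  (Finset.univ.filter (fun i : Fin n =>
    ∃ j : Fin n, (j : ℕ) = (i : ℕ) + 1 ∧ w i = p ∧ w j = q)).card

open Finset

theorem card_filter_eq_sum_card_filter_cons {α : Type*} [Fintype α] {n : ℕ}
    (P : (Fin (n + 1) → α) → Prop) [DecidablePred P] :
    #{w | P w} = ∑ a, #{v : Fin n → α | P (Fin.cons a v)} := by
  simp only [card_filter]
  rw [← Fintype.sum_prod_type']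
  exact (Fintype.sum_equiv (Fin.consEquiv fun _ => α) _ _ fun _ => rfl).symm

section Tabulate

variable {M : Type*}

def tabulate (f : ℤ → M) (a : ℤ) : ℕ → List M
  | 0 => []
  | n + 1 => f a :: tabulate f (a + 1) n

theorem length_tabulate (f : ℤ → M) (a : ℤ) (n : ℕ) : (tabulate f a n).length = n := by
  induction n generalizing a with
  | zero => rfl
  | succ n ih => simp [tabulate, ih]

theorem tabulate_add_length (f : ℤ → M) (a : ℤ) (k l : ℕ) :
    tabulate f a (k + l) = tabulate f a k ++ tabulate f (a + k) l := by
  induction k generalizing a with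
  | zero => simp [tabulate]
  | succ k ih =>
    rw [Nat.add_right_comm, tabulate, ih, tabulate, List.cons_append]
    push_cast
    ring_nf

theorem tabulate_succ' (f : ℤ → M) (a : ℤ) (n : ℕ) :
    tabulate f a (n + 1) = tabulate f a n ++ [f (a + n)] :=
  tabulate_add_length f a n 1

theorem take_tabulate_add (f : ℤ → M) (a : ℤ) (k l : ℕ) :
    (tabulate f a (k + l)).take k = tabulate f a k := by
  rw [tabulate_add_length, List.take_left' (length_tabulate f a k)]

theorem drop_tabulate_add (f : ℤ → M) (a : ℤ) (k l : ℕ) :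
    (tabulate f a (k + l)).drop k = tabulate f (a + k) l := by
  rw [tabulate_add_length, List.drop_left' (length_tabulate f a k)]

theorem tabulate_comp_add (f : ℤ → M) (a c : ℤ) (n : ℕ) :
    tabulate (fun d => f (d + c)) a n = tabulate f (a + c) n := by
  induction n generalizing a with
  | zero => rfl
  | succ n ih => rw [tabulate, ih, tabulate, add_right_comm]

theorem tabulate_comp_add_one [Zero M] {f : ℤ → M} {a : ℤ} {n : ℕ} (h : f (a + n) = 0) :
    tabulate (fun d => f (d + 1)) a n = (tabulate f a n ++ [0]).tail := by
  rw [tabulate_comp_add, ← h, ← tabulate_succ']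
  rfl

theorem tabulate_comp_sub_one [Zero M] {f : ℤ → M} {a : ℤ} {n : ℕ} (h : f (a - 1) = 0) :
    tabulate (fun d => f (d - 1)) a n = (0 :: tabulate f a n).dropLast := by
  have : 0 :: tabulate f a n = tabulate f (a - 1) (n + 1) := by rw [tabulate, sub_add_cancel, h]
  rw [this, tabulate_succ', List.dropLast_concat]
  exact tabulate_comp_add f a (-1) n

theorem tabulate_add [Add M] (f g : ℤ → M) (a : ℤ) (n : ℕ) :
    tabulate (fun d => f d + g d) a n = List.zipWith (· + ·) (tabulate f a n) (tabulate g a n) := by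
  induction n generalizing a with
  | zero => rfl
  | succ n ih => simp only [tabulate, ih, List.zipWith_cons_cons]

theorem sum_tabulate [AddCommMonoid M] (f : ℤ → M) (a : ℤ) (n : ℕ) :
    (tabulate f a n).sum = ∑ d ∈ Ico a (a + n), f d := by
  induction n with
  | zero => simp [tabulate]
  | succ n ih =>
    rw [tabulate_succ', List.sum_append, ih, Nat.cast_succ, ← add_assoc,
      ← sum_Ico_add_eq_sum_Ico_add_one (by omega)]
    simp

end Tabulate

lemma cnt_le {n : ℕ} (w : Fin n → Bool) (p q : Bool) : cnt w p q ≤ n :=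
  (card_filter_le _ _).trans_eq (card_fin n)

lemma cnt_fin_one (w : Fin 1 → Bool) (p q : Bool) : cnt w p q = 0 := by
  simp [cnt]

lemma cnt_cons {n : ℕ} (b : Bool) (v : Fin (n + 1) → Bool) (p q : Bool) :
    cnt (Fin.cons b v : Fin (n + 2) → Bool) p q =
      cnt v p q + if b = p ∧ v 0 = q then 1 else 0 := by
  rw [cnt, Fin.card_filter_univ_succ', add_comm]
  simp [cnt, Fin.exists_fin_succ]

def htMinusHH {n : ℕ} (w : Fin n → Bool) : ℤ := cnt w true false - cnt w true true

lemma abs_htMinusHH_le {n : ℕ} (w : Fin n → Bool) : |htMinusHH w| ≤ n := by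
  have := cnt_le w true false
  have := cnt_le w true true
  rw [abs_le, htMinusHH]
  omega

lemma htMinusHH_fin_one (w : Fin 1 → Bool) : htMinusHH w = 0 := by
  simp [htMinusHH, cnt_fin_one]

def pairWeight : Bool → Bool → ℤ
  | true, false => 1
  | true, true => -1
  | false, _ => 0

lemma htMinusHH_cons {n : ℕ} (b : Bool) (v : Fin (n + 1) → Bool) :
    htMinusHH (Fin.cons b v : Fin (n + 2) → Bool) = htMinusHH v + pairWeight b (v 0) := by
  simp only [htMinusHH, cnt_cons]
  cases b <;> cases v 0 <;> simp [pairWeight] <;> ring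

/-- Counts words of length `n + 1` (not `n`) with first letter `b`. -/
def wordCount (n : ℕ) (b : Bool) (d : ℤ) : ℕ :=
  #{v : Fin n → Bool | htMinusHH (Fin.cons b v : Fin (n + 1) → Bool) = d}

lemma card_htMinusHH_eq_sum_wordCount (n : ℕ) (d : ℤ) :
    #{w : Fin (n + 1) → Bool | htMinusHH w = d} = ∑ b, wordCount n b d :=
  card_filter_eq_sum_card_filter_cons _

lemma wordCount_zero (b : Bool) : wordCount 0 b = fun d => if d = 0 then 1 else 0 := by
  funext d
  simp [wordCount, htMinusHH_fin_one, eq_comm, apply_ite card]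

lemma wordCount_succ (n : ℕ) (b : Bool) (d : ℤ) :
    wordCount (n + 1) b d = ∑ c, wordCount n c (d - pairWeight b c) := by
  simp only [wordCount, htMinusHH_cons, ← eq_sub_iff_add_eq]
  exact card_filter_eq_sum_card_filter_cons _

lemma wordCount_eq_zero {n : ℕ} (b : Bool) {d : ℤ} (hd : n + 1 < |d|) :
    wordCount n b d = 0 := by
  rw [wordCount, card_eq_zero, filter_eq_empty_iff]
  rintro v - rfl
  exact hd.not_ge (abs_htMinusHH_le _)

/-- `wordCount_succ` on windows of values of `#HT − #HH`, for words starting with `T` and with `H`: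
prepending `H` shifts the value by `+1` before a `T` and by `-1` before an `H`. -/
def dpStep : List ℕ × List ℕ → List ℕ × List ℕ
  | (t, h) => (List.zipWith (· + ·) t h, List.zipWith (· + ·) (0 :: t).dropLast (h ++ [0]).tail)

def dpInit (m : ℕ) : List ℕ × List ℕ :=
  (tabulate (fun d => if d = 0 then 1 else 0) (-m) (2 * m + 1),
    tabulate (fun d => if d = 0 then 1 else 0) (-m) (2 * m + 1))

def wordCountTable (m n : ℕ) : List ℕ × List ℕ :=
  (tabulate (wordCount n false) (-m) (2 * m + 1), tabulate (wordCount n true) (-m) (2 * m + 1))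

lemma dpStep_wordCountTable {m n : ℕ} (h : n + 1 ≤ m) :
    dpStep (wordCountTable m n) = wordCountTable m (n + 1) := by
  have hlo : wordCount n false (-m - 1) = 0 :=
    wordCount_eq_zero _ (by rw [abs_of_neg (by omega)]; omega)
  have hhi : wordCount n true (-m + (2 * m + 1 : ℕ)) = 0 :=
    wordCount_eq_zero _ (by rw [abs_of_pos (by omega)]; omega)
  simp only [dpStep, wordCountTable, Prod.mk.injEq, ← tabulate_comp_sub_one hlo,
    ← tabulate_comp_add_one hhi, ← tabulate_add]
  constructor <;> congr 1 <;> funext d <;> simp [wordCount_succ, pairWeight, add_comm]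

lemma dpStep_iterate {m n : ℕ} (h : n ≤ m) : dpStep^[n] (dpInit m) = wordCountTable m n := by
  induction n with
  | zero => simp [dpInit, wordCountTable, wordCount_zero]
  | succ n ih => rw [Function.iterate_succ_apply', ih (by omega), dpStep_wordCountTable h]

def htMinusHHCounts (n : ℕ) : List ℕ :=
  match dpStep^[n] (dpInit (n + 1)) with
  | (t, h) => List.zipWith (· + ·) h t

lemma htMinusHHCounts_eq (n : ℕ) :
    htMinusHHCounts n = tabulate (fun d => #{w : Fin (n + 1) → Bool | htMinusHH w = d})
      (-(n + 1 : ℕ)) (2 * (n + 1) + 1) := by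
  rw [htMinusHHCounts, dpStep_iterate n.le_succ]
  simp only [wordCountTable, card_htMinusHH_eq_sum_wordCount, Fintype.sum_bool, tabulate_add]

lemma card_htMinusHH_mem_Ico (n : ℕ) (a : ℤ) (k : ℕ) :
    #{w : Fin n → Bool | htMinusHH w ∈ Ico a (a + k)} =
      (tabulate (fun d => #{w : Fin n → Bool | htMinusHH w = d}) a k).sum := by
  rw [sum_tabulate, sum_card_fiberwise_eq_card_filter]

lemma card_cnt_ht_lt_cnt_hh (n : ℕ) :
    #{w : Fin (n + 1) → Bool | cnt w true false < cnt w true true} =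
      ((htMinusHHCounts n).take (n + 1)).sum := by
  rw [htMinusHHCounts_eq, show 2 * (n + 1) + 1 = (n + 1) + (n + 2) by ring, take_tabulate_add,
    ← card_htMinusHH_mem_Ico]
  congr 1
  refine filter_congr fun w _ => ?_
  have := abs_le.1 (abs_htMinusHH_le w)
  simp only [mem_Ico, htMinusHH] at this ⊢
  omega

lemma card_cnt_hh_lt_cnt_ht (n : ℕ) :
    #{w : Fin (n + 1) → Bool | cnt w true true < cnt w true false} =
      ((htMinusHHCounts n).drop (n + 2)).sum := by
  rw [htMinusHHCounts_eq, show 2 * (n + 1) + 1 = (n + 2) + (n + 1) by ring, drop_tabulate_add,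
    ← card_htMinusHH_mem_Ico]
  congr 1
  refine filter_congr fun w _ => ?_
  have := abs_le.1 (abs_htMinusHH_le w)
  simp only [mem_Ico, htMinusHH] at this ⊢
  omega

set_option maxRecDepth 100000 in
theorem stmt11 :
    (Finset.univ.filter (fun w : Fin 100 → Bool =>
        cnt w true false < cnt w true true)).card <
    (Finset.univ.filter (fun w : Fin 100 → Bool =>
        cnt w true true < cnt w true false)).card :=
  calc _ = ((htMinusHHCounts 99).take 100).sum := card_cnt_ht_lt_cnt_hh 99
    _ < ((htMinusHHCounts 99).drop 101).sum := by decide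
    _ = _ := (card_cnt_hh_lt_cnt_ht 99).symm
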